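/- Let F : M^op → Vect_F be a J-presentable functor. Then for every u ∈ int M the sum over v ∈ (↑u) ∩ int(↓T(u)) of β⁰(F)(v) is finite; that is, the 0-th Betti function β⁰(F) : int M → ℕ, u ↦ dim_F Nat(F, S_u), is an admissible Betti function. -/

import Mathlib

open CategoryTheory CategoryTheory.Limits Opposite

noncomputable section

/-- The strip `M ⊂ ℝᵒᵖ × ℝ` between the two lines of slope `-1` given by
`x + y = a` and `x + y = b`. -/
def Strip (a b : ℝ) : Type := {p : ℝ × ℝ // a ≤ p.1 + p.2 ∧ p.1 + p.2 ≤ b}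

namespace Strip

variable {a b : ℝ}

/-- The partial order inherited from `ℝᵒᵖ × ℝ`. -/
instance : PartialOrder (Strip a b) where
  le p q := q.1.1 ≤ p.1.1 ∧ p.1.2 ≤ q.1.2
  le_refl p := ⟨le_rfl, le_rfl⟩
  le_trans p q r h h' := ⟨le_trans h'.1 h.1, le_trans h.2 h'.2⟩
  le_antisymm p q h h' :=
    Subtype.ext (Prod.ext (le_antisymm h'.1 h.1) (le_antisymm h.2 h'.2))

lemma le_def {p q : Strip a b} : p ≤ q ↔ q.1.1 ≤ p.1.1 ∧ p.1.2 ≤ q.1.2 := Iff.rfl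

/-- The glide reflection `T`. -/
def glide (p : Strip a b) : Strip a b :=
  ⟨(a - p.1.2, b - p.1.1), by
    obtain ⟨h1, h2⟩ := p.2; constructor <;> dsimp <;> linarith⟩

/-- The glide reflection `T` as an order isomorphism of `M`. -/
def glideEquiv : Strip a b ≃o Strip a b where
  toFun := glide
  invFun p := ⟨(b - p.1.2, a - p.1.1), by
    obtain ⟨h1, h2⟩ := p.2; constructor <;> dsimp <;> linarith⟩
  left_inv p := Subtype.ext (by simp [glide])
  right_inv p := Subtype.ext (by simp [glide])
  map_rel_iff' {p q} := by
    show (glide p ≤ glide q) ↔ _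
    simp only [le_def, glide]
    constructor <;> rintro ⟨h1, h2⟩ <;> exact ⟨by linarith, by linarith⟩

lemma glideEquiv_coords (p : Strip a b) :
    (glideEquiv p).1 = (a - p.1.2, b - p.1.1) := rfl

lemma glideEquiv_symm_coords (p : Strip a b) :
    (glideEquiv.symm p).1 = (b - p.1.2, a - p.1.1) := rfl

/-- The boundary `∂M = l₀ ∪ l₁`. -/
def OnBoundary (p : Strip a b) : Prop := p.1.1 + p.1.2 = a ∨ p.1.1 + p.1.2 = b

/-- The interior `int M`. -/
def InInterior (p : Strip a b) : Prop := a < p.1.1 + p.1.2 ∧ p.1.1 + p.1.2 < b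

/-- `u` belongs to `(↓v) ∩ int(↑ T⁻¹ v)`, the support of the contravariant block `B_v`;
equivalently, `v ∈ (↑u) ∩ int(↓ T u)`. -/
def BlockCond (v u : Strip a b) : Prop :=
  u ≤ v ∧ u.1.1 < b - v.1.2 ∧ a - v.1.1 < u.1.2

lemma blockCond_convex {v u u' u'' : Strip a b} (h1 : u ≤ u') (h2 : u' ≤ u'')
    (hu : BlockCond v u) (hu'' : BlockCond v u'') : BlockCond v u' :=
  ⟨le_trans h2 hu''.1, lt_of_le_of_lt h1.1 hu.2.1, lt_of_lt_of_le hu.2.2 h1.2⟩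

lemma simpleCond_convex {w u u' u'' : Strip a b} (h1 : u ≤ u') (h2 : u' ≤ u'')
    (hu : u = w) (hu'' : u'' = w) : u' = w :=
  le_antisymm (hu'' ▸ h2) (hu ▸ h1)

variable (a b) in
/-- An axis-aligned rectangle in `M` with corners `u ≤ v ≤ w` and remaining corner on `l₁`. -/
def IsCohomRect (u v w : Strip a b) : Prop :=
  u ≤ v ∧ v ≤ w ∧
    ((v.1.1 = u.1.1 ∧ v.1.2 = w.1.2 ∧ w.1.1 + u.1.2 = b) ∨
     (v.1.1 = w.1.1 ∧ v.1.2 = u.1.2 ∧ u.1.1 + w.1.2 = b))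

lemma IsCohomRect.w_le_glide {u v w : Strip a b} (h : IsCohomRect a b u v w) :
    w ≤ glideEquiv u := by
  obtain ⟨h1, h2, h3⟩ := h
  have hu := u.2; have hv := v.2; have hw := w.2
  obtain ⟨hle1, hle2⟩ := h1; obtain ⟨hle3, hle4⟩ := h2
  rw [le_def]
  rcases h3 with ⟨e1, e2, e3⟩ | ⟨e1, e2, e3⟩ <;>
    exact ⟨by rw [glideEquiv_coords]; dsimp; linarith,
           by rw [glideEquiv_coords]; dsimp; linarith⟩

lemma IsCohomRect.glideInv_le {u v w : Strip a b} (h : IsCohomRect a b u v w) :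
    glideEquiv.symm w ≤ u := by
  have := h.w_le_glide
  have h2 := glideEquiv.symm.monotone this
  simpa using h2

end Strip

section Functors

open Strip

variable (a b : ℝ) (K : Type) [Field K]

attribute [local instance] Classical.propDecidable

/-- auxiliary linear map used for the internal maps of `condFunctor`. -/
def condMap (P : Strip a b → Prop) (u u' : Strip a b) :
    ((PLift (P u') → K) →ₗ[K] (PLift (P u) → K)) where
  toFun f _ := if h' : P u' then f ⟨h'⟩ else 0
  map_add' f g := by funext h; by_cases h' : P u' <;> simp [h']
  map_smul' c f := by funext h; by_cases h' : P u' <;> simp [h']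

@[simp] lemma condMap_apply (P : Strip a b → Prop) (u u' : Strip a b)
    (f : PLift (P u') → K) (h : PLift (P u)) :
    condMap a b K P u u' f h = if h' : P u' then f ⟨h'⟩ else 0 := rfl

/-- A functor `Mᵒᵖ ⥤ Vect_K` supported on the set of points satisfying `P`,
with internal maps the identity wherever possible.  Both the contravariant blocks `B_v`
and the simple functors `S_w` arise this way. -/
def condFunctor (P : Strip a b → Prop)
    (hconv : ∀ ⦃u u' u'' : Strip a b⦄, u ≤ u' → u' ≤ u'' → P u → P u'' → P u') :
    (Strip a b)ᵒᵖ ⥤ ModuleCat K where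
  obj u := ModuleCat.of K (PLift (P u.unop) → K)
  map {x y} f := ModuleCat.ofHom (condMap a b K P y.unop x.unop)
  map_id x := by
    refine ModuleCat.hom_ext (LinearMap.ext fun f => ?_)
    funext h
    show (if h' : P x.unop then f ⟨h'⟩ else 0) = f h
    rw [dif_pos h.down]
  map_comp {x y z} f g := by
    refine ModuleCat.hom_ext (LinearMap.ext fun v => ?_)
    funext h
    show (if h' : P x.unop then v ⟨h'⟩ else 0)
        = condMap a b K P z.unop y.unop (condMap a b K P y.unop x.unop v) h
    by_cases hx : P x.unop
    · have hy : P y.unop := hconv (leOfHom g.unop) (leOfHom f.unop) h.down hx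
      simp [hx, hy]
    · by_cases hy : P y.unop <;> simp [hx, hy]

/-- The contravariant block `B_v`. -/
def Block (v : Strip a b) : (Strip a b)ᵒᵖ ⥤ ModuleCat K :=
  condFunctor a b K (BlockCond v) (fun _ _ _ h1 h2 hu hu'' => blockCond_convex h1 h2 hu hu'')

/-- The simple functor `S_w`. -/
def SimpleF (w : Strip a b) : (Strip a b)ᵒᵖ ⥤ ModuleCat K :=
  condFunctor a b K (fun u => u = w) (fun _ _ _ h1 h2 hu hu'' => simpleCond_convex h1 h2 hu hu'')

variable {a b K}

/-- The structure map `G(y) → G(x)` of a functor, for `x ≤ y` in `M`. -/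
def seqMap (G : (Strip a b)ᵒᵖ ⥤ ModuleCat K) {x y : Strip a b} (h : x ≤ y) :
    G.obj (op y) ⟶ G.obj (op x) :=
  G.map (homOfLE h).op

variable (a b K)

/-- Pointwise finite-dimensionality. -/
def Pfd (G : (Strip a b)ᵒᵖ ⥤ ModuleCat K) : Prop :=
  ∀ u : Strip a b, FiniteDimensional K (G.obj (op u))

/-- Vanishing on the boundary `∂M`. -/
def VanishesOnBoundary (G : (Strip a b)ᵒᵖ ⥤ ModuleCat K) : Prop :=
  ∀ u : Strip a b, OnBoundary u → ∀ x : G.obj (op u), x = 0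

/-- Sequential continuity: for every increasing sequence `u_k` converging to `L`, the
natural map `G L → lim_k G (u k)` is an isomorphism; elementarily, every compatible
family lifts uniquely. -/
def SeqContinuousF (G : (Strip a b)ᵒᵖ ⥤ ModuleCat K) : Prop :=
  ∀ (u : ℕ → Strip a b) (hu : Monotone u) (L : Strip a b) (hle : ∀ k, u k ≤ L),
    Filter.Tendsto (fun k => (u k).1) Filter.atTop (nhds L.1) →
    ∀ x : ∀ k, G.obj (op (u k)),
      (∀ k, seqMap G (hu (Nat.le_succ k)) (x (k + 1)) = x k) →
      ∃! y : G.obj (op L), ∀ k, seqMap G (hle k) y = x k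

/-- Cohomologicality: the long sequences associated to axis-aligned rectangles with one
corner on `l₁` are exact. -/
def Cohomological (G : (Strip a b)ᵒᵖ ⥤ ModuleCat K) : Prop :=
  VanishesOnBoundary a b K G ∧
  ∀ (u v w : Strip a b) (h : IsCohomRect a b u v w) (n : ℤ),
    (Function.Exact
        (seqMap G (((glideEquiv ^ n : Strip a b ≃o Strip a b)).monotone h.w_le_glide))
        (seqMap G (((glideEquiv ^ n : Strip a b ≃o Strip a b)).monotone h.2.1))) ∧
    (Function.Exact
        (seqMap G (((glideEquiv ^ n : Strip a b ≃o Strip a b)).monotone h.2.1))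
        (seqMap G (((glideEquiv ^ n : Strip a b ≃o Strip a b)).monotone h.1))) ∧
    (Function.Exact
        (seqMap G (((glideEquiv ^ n : Strip a b ≃o Strip a b)).monotone h.1))
        (seqMap G (((glideEquiv ^ n : Strip a b ≃o Strip a b)).monotone h.glideInv_le)))

/-- Bounded above support: the support is contained in the downset `{y - x ≤ c}`. -/
def BddAboveSupport (G : (Strip a b)ᵒᵖ ⥤ ModuleCat K) : Prop :=
  ∃ c : ℝ, ∀ u : Strip a b, c < u.1.2 - u.1.1 → ∀ x : G.obj (op u), x = 0

/-- Membership in the category `𝒥` of pfd, cohomological, sequentially continuous functors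
with bounded above support. -/
def MemJ (G : (Strip a b)ᵒᵖ ⥤ ModuleCat K) : Prop :=
  Pfd a b K G ∧ Cohomological a b K G ∧ SeqContinuousF a b K G ∧ BddAboveSupport a b K G

/-- `𝒥`-presentability. -/
def JPresentable (G : (Strip a b)ᵒᵖ ⥤ ModuleCat K) : Prop :=
  ∃ (H P : (Strip a b)ᵒᵖ ⥤ ModuleCat K) (_ : MemJ a b K H) (_ : MemJ a b K P)
    (f : H ⟶ P) (g : P ⟶ G),
      (∀ u : (Strip a b)ᵒᵖ, Function.Exact (f.app u) (g.app u)) ∧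
      (∀ u : (Strip a b)ᵒᵖ, Function.Surjective (g.app u))

/-- The 0-th Betti function `β⁰(G) : int M → ℕ`, `u ↦ dim Nat(G, S_u)`. -/
def beta0 (G : (Strip a b)ᵒᵖ ⥤ ModuleCat K) (v : Strip a b) : ℕ :=
  if InInterior v then Module.finrank K (G ⟶ SimpleF a b K v) else 0

/-- Admissible Betti functions. -/
def AdmissibleBetti (β : Strip a b → ℕ) : Prop :=
  (∀ v, ¬ InInterior v → β v = 0) ∧
  (∃ c : ℝ, ∀ v : Strip a b, c < v.1.2 - v.1.1 → β v = 0) ∧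
  (∀ u : Strip a b, {v : Strip a b | BlockCond v u ∧ β v ≠ 0}.Finite)

/-- Admissible Euler functions. -/
def AdmissibleEuler (μ : Strip a b → ℤ) : Prop :=
  AdmissibleBetti a b (fun v => (μ v).natAbs)

end Functors

section More

open Strip DirectSum

variable (a b : ℝ) (K : Type) [Field K]

attribute [local instance] Classical.propDecidable

lemma condMap_comp (P : Strip a b → Prop)
    (hconv : ∀ ⦃u u' u'' : Strip a b⦄, u ≤ u' → u' ≤ u'' → P u → P u'' → P u')
    {u u' u'' : Strip a b} (h1 : u ≤ u') (h2 : u' ≤ u'') :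
    condMap a b K P u u'' =
      (condMap a b K P u u').comp (condMap a b K P u' u'') := by
  refine LinearMap.ext fun f => funext fun h => ?_
  by_cases hx : P u''
  · have hy : P u' := hconv h1 h2 h.down hx
    simp [hx, hy]
  · by_cases hy : P u' <;> simp [hx, hy]

/-- A direct sum of `condFunctor`s for an indexed family of supports. -/
def condSumFunctor (ι : Type) (P : ι → Strip a b → Prop)
    (hconv : ∀ i, ∀ ⦃u u' u'' : Strip a b⦄, u ≤ u' → u' ≤ u'' → P i u → P i u'' → P i u') :
    (Strip a b)ᵒᵖ ⥤ ModuleCat K where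
  obj u := ModuleCat.of K (⨁ i : ι, (PLift (P i u.unop) → K))
  map {x y} f := ModuleCat.ofHom
    (DFinsupp.mapRange.linearMap (fun i => condMap a b K (P i) y.unop x.unop))
  map_id x := by
    have e : (fun i => condMap a b K (P i) x.unop x.unop)
        = fun i : ι => (LinearMap.id : (PLift (P i x.unop) → K) →ₗ[K] _) := by
      funext i
      refine LinearMap.ext fun f => funext fun h => ?_
      show (if h' : P i x.unop then f ⟨h'⟩ else 0) = f h
      rw [dif_pos h.down]
    change ModuleCat.ofHom
      (DFinsupp.mapRange.linearMap fun i => condMap a b K (P i) x.unop x.unop) = _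
    rw [e, DFinsupp.mapRange.linearMap_id]
    rfl
  map_comp {x y z} f g := by
    have e : (fun i => condMap a b K (P i) z.unop x.unop)
        = fun i => (condMap a b K (P i) z.unop y.unop).comp
            (condMap a b K (P i) y.unop x.unop) := by
      funext i
      exact condMap_comp a b K (P i) (hconv i) (leOfHom g.unop) (leOfHom f.unop)
    change ModuleCat.ofHom
      (DFinsupp.mapRange.linearMap fun i => condMap a b K (P i) z.unop x.unop) = _
    rw [e, DFinsupp.mapRange.linearMap_comp]
    rfl

/-- The direct sum `⊕_{v} B_v^{m v}` of contravariant blocks with multiplicities `m`. -/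
def blockSum (m : Strip a b → ℕ) : (Strip a b)ᵒᵖ ⥤ ModuleCat K :=
  condSumFunctor a b K (Σ v : Strip a b, Fin (m v)) (fun s u => BlockCond s.1 u)
    (fun _ _ _ _ h1 h2 hu hu'' => blockCond_convex h1 h2 hu hu'')

/-- The pointwise direct sum of a sequence of functors. -/
def sumFunctor (Q : ℕ → (Strip a b)ᵒᵖ ⥤ ModuleCat K) :
    (Strip a b)ᵒᵖ ⥤ ModuleCat K where
  obj u := ModuleCat.of K (⨁ n : ℕ, (Q n).obj u)
  map {x y} f := ModuleCat.ofHom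
    (DFinsupp.mapRange.linearMap (fun n => (((Q n).map f).hom : (Q n).obj x →ₗ[K] (Q n).obj y)))
  map_id x := by
    have e : (fun n => (((Q n).map (𝟙 x)).hom : (Q n).obj x →ₗ[K] (Q n).obj x))
        = fun n : ℕ => LinearMap.id := by
      funext n; rw [CategoryTheory.Functor.map_id]; rfl
    change ModuleCat.ofHom (DFinsupp.mapRange.linearMap
      fun n => (((Q n).map (𝟙 x)).hom : (Q n).obj x →ₗ[K] (Q n).obj x)) = _
    rw [e, DFinsupp.mapRange.linearMap_id]
    rfl
  map_comp {x y z} f g := by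
    have e : (fun n => (((Q n).map (f ≫ g)).hom : (Q n).obj x →ₗ[K] (Q n).obj z))
        = fun n => ((((Q n).map g).hom : (Q n).obj y →ₗ[K] (Q n).obj z).comp
            (((Q n).map f).hom : (Q n).obj x →ₗ[K] (Q n).obj y)) := by
      funext n; rw [CategoryTheory.Functor.map_comp]; rfl
    change ModuleCat.ofHom (DFinsupp.mapRange.linearMap
      fun n => (((Q n).map (f ≫ g)).hom : (Q n).obj x →ₗ[K] (Q n).obj z)) = _
    rw [e, DFinsupp.mapRange.linearMap_comp]
    rfl

/-- Precomposition with the glide reflection `T`, as an endofunctor of `Mᵒᵖ`. -/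
def Tfun : (Strip a b)ᵒᵖ ⥤ (Strip a b)ᵒᵖ :=
  ((glideEquiv (a := a) (b := b)).monotone.functor).op

/-- A resolution of `G` by functors in `𝒥` (hence a projective resolution in `𝒞`). -/
def IsJResolution (G : (Strip a b)ᵒᵖ ⥤ ModuleCat K)
    (P : ℕ → (Strip a b)ᵒᵖ ⥤ ModuleCat K)
    (d : ∀ n, P (n + 1) ⟶ P n) (ε : P 0 ⟶ G) : Prop :=
  (∀ n, MemJ a b K (P n)) ∧
  (∀ u, Function.Surjective ((ε.app u))) ∧
  (∀ u, Function.Exact ((d 0).app u) (ε.app u)) ∧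
  (∀ n u, Function.Exact ((d (n + 1)).app u) ((d n).app u))

/-- Equivariance of a resolution: `P (n+3) = P n ∘ T` and `d (n+3) = - d n ∘ T`. -/
def IsEquivariantRes (P : ℕ → (Strip a b)ᵒᵖ ⥤ ModuleCat K)
    (d : ∀ n, P (n + 1) ⟶ P n) : Prop :=
  ∃ hEq : ∀ n, P (n + 3) = Tfun a b ⋙ P n,
    ∀ n, d (n + 3) =
      eqToHom (hEq (n + 1)) ≫ (-(Functor.whiskerLeft (Tfun a b) (d n))) ≫ eqToHom (hEq n).symm

/-- The cochain complex `Nat(P_•, S_v)` obtained by applying `Nat(-, S_v)` to a resolution. -/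
def dStar (P : ℕ → (Strip a b)ᵒᵖ ⥤ ModuleCat K) (d : ∀ n, P (n + 1) ⟶ P n)
    (v : Strip a b) (n : ℕ) :
    (P n ⟶ SimpleF a b K v) →ₗ[K] (P (n + 1) ⟶ SimpleF a b K v) :=
  Linear.leftComp K (SimpleF a b K v) (d n)

/-- `dim_K Extⁿ_𝒞(G, S_v)`, computed as the `n`-th cohomology of `Nat(P_•, S_v)` for a
projective resolution `P_•` of `G` in `𝒞`. -/
def extDim (P : ℕ → (Strip a b)ᵒᵖ ⥤ ModuleCat K) (d : ∀ n, P (n + 1) ⟶ P n)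
    (v : Strip a b) : ℕ → ℕ
  | 0 => Module.finrank K (LinearMap.ker (dStar a b K P d v 0))
  | (n + 1) =>
      Module.finrank K
        (↥(LinearMap.ker (dStar a b K P d v (n + 1))) ⧸
          Submodule.comap (LinearMap.ker (dStar a b K P d v (n + 1))).subtype
            (LinearMap.range (dStar a b K P d v n)))

/-- The partial alternating sum `Σ_{n < N} (-1)ⁿ dim Extⁿ(F, S_v)`. -/
def eulerAt (P : ℕ → (Strip a b)ᵒᵖ ⥤ ModuleCat K) (d : ∀ n, P (n + 1) ⟶ P n)
    (v : Strip a b) (N : ℕ) : ℤ :=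
  ∑ n ∈ Finset.range N, (-1 : ℤ) ^ n * (extDim a b K P d v n : ℤ)

/-- Objects of `𝒥`. -/
def JObj : Type 1 := {G : (Strip a b)ᵒᵖ ⥤ ModuleCat.{0} K // MemJ a b K G}

/-- Objects of `pres(𝒥)`. -/
def PresObj : Type 1 := {G : (Strip a b)ᵒᵖ ⥤ ModuleCat.{0} K // JPresentable a b K G}

/-- Relations defining `K₀` of `𝒥`: `[Q] = [P] + [R]` for every (automatically split)
short exact sequence `0 → P → Q → R → 0` in `𝒥`. -/
def K0JRelations : Set (FreeAbelianGroup (JObj a b K)) :=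
  {x | ∃ (P Q R : JObj a b K) (κ : P.1 ⟶ Q.1) (ρ : Q.1 ⟶ R.1),
    (∀ u, Function.Injective (κ.app u)) ∧ (∀ u, Function.Surjective (ρ.app u)) ∧
    (∀ u, Function.Exact (κ.app u) (ρ.app u)) ∧
    x = FreeAbelianGroup.of Q - FreeAbelianGroup.of P - FreeAbelianGroup.of R}

/-- The Grothendieck group `K₀(𝒥)`. -/
def K0J : Type 1 :=
  FreeAbelianGroup (JObj a b K) ⧸ AddSubgroup.closure (K0JRelations a b K)

instance : AddCommGroup (K0J a b K) := by unfold K0J; infer_instance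

/-- The class `[G] ∈ K₀(𝒥)`. -/
def K0Jmk (G : JObj a b K) : K0J a b K :=
  QuotientAddGroup.mk (FreeAbelianGroup.of G)

/-- Relations defining `K₀` of `pres(𝒥)`: `[Q] = [P] + [R]` for every short exact
sequence `0 → P → Q → R → 0` of `𝒥`-presentable functors. -/
def K0PresRelations : Set (FreeAbelianGroup (PresObj a b K)) :=
  {x | ∃ (P Q R : PresObj a b K) (κ : P.1 ⟶ Q.1) (ρ : Q.1 ⟶ R.1),
    (∀ u, Function.Injective (κ.app u)) ∧ (∀ u, Function.Surjective (ρ.app u)) ∧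
    (∀ u, Function.Exact (κ.app u) (ρ.app u)) ∧
    x = FreeAbelianGroup.of Q - FreeAbelianGroup.of P - FreeAbelianGroup.of R}

/-- The Grothendieck group `K₀(pres 𝒥)`. -/
def K0Pres : Type 1 :=
  FreeAbelianGroup (PresObj a b K) ⧸ AddSubgroup.closure (K0PresRelations a b K)

instance : AddCommGroup (K0Pres a b K) := by unfold K0Pres; infer_instance

/-- The class `[G] ∈ K₀(pres 𝒥)`. -/
def K0PresMk (G : PresObj a b K) : K0Pres a b K :=
  QuotientAddGroup.mk (FreeAbelianGroup.of G)

/-- The abelian group `G(𝔹)` of admissible Euler functions. -/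
def eulerGroup : AddSubgroup (Strip a b → ℤ) where
  carrier := {μ | AdmissibleEuler a b μ}
  zero_mem' := by
    refine ⟨fun v _ => rfl, ⟨0, fun v _ => rfl⟩, fun u => ?_⟩
    convert Set.finite_empty
    ext v; simp
  add_mem' := by
    rintro μ ν ⟨h1, ⟨c1, h2⟩, h3⟩ ⟨h1', ⟨c2, h2'⟩, h3'⟩
    refine ⟨fun v hv => ?_, ⟨max c1 c2, fun v hv => ?_⟩, fun u => ?_⟩
    · simp only [Pi.add_apply]
      rw [show μ v = 0 by simpa using h1 v hv, show ν v = 0 by simpa using h1' v hv]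
      rfl
    · simp only [Pi.add_apply]
      rw [show μ v = 0 by simpa using h2 v (lt_of_le_of_lt (le_max_left _ _) hv),
        show ν v = 0 by simpa using h2' v (lt_of_le_of_lt (le_max_right _ _) hv)]
      rfl
    · refine Set.Finite.subset ((h3 u).union (h3' u)) ?_
      rintro v ⟨hb, hne⟩
      by_cases hμ : μ v = 0
      · exact Or.inr ⟨hb, by simp only [Pi.add_apply, hμ, zero_add] at hne; simpa using hne⟩
      · exact Or.inl ⟨hb, by simpa using hμ⟩
  neg_mem' := by
    rintro μ ⟨h1, h2, h3⟩
    refine ⟨fun v hv => ?_, ?_, fun u => ?_⟩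
    · simp only [Pi.neg_apply, Int.natAbs_neg]; exact h1 v hv
    · obtain ⟨c, hc⟩ := h2
      exact ⟨c, fun v hv => by simp only [Pi.neg_apply, Int.natAbs_neg]; exact hc v hv⟩
    · refine Set.Finite.subset (h3 u) ?_
      rintro v ⟨hb, hne⟩
      exact ⟨hb, by simpa [Int.natAbs_neg] using hne⟩

/-- Subfunctors of a functor `G : Mᵒᵖ ⥤ Vect_K`. -/
def Subfunctor (G : (Strip a b)ᵒᵖ ⥤ ModuleCat K) : Type :=
  {S : ∀ u : Strip a b, Submodule K (G.obj (op u)) //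
    ∀ (u u' : Strip a b) (h : u' ≤ u), Submodule.map (seqMap G h).hom (S u) ≤ S u'}

end More

end

/-!
A presentation `P → G → 0` with `P ∈ 𝒥` turns a map `G → S_v` that is nonzero at `v`
into a map `P → S_v` that is nonzero at `v`, so `β⁰(G)(v) ≠ 0` forces `v` to be a
generator of `P`: `P(v)` is not spanned by the images of the `P(w)`, `w > v`.
Fix `u` and consider generators `v ∈ (↑u) ∩ int(↓T u)`. Exactness along the
cohomological rectangles shows that the rank of `P(v₁, u₂) → P(u)` is strictly monotone
in `v₁` and that of `P(u₁, v₂) → P(u)` strictly antitone in `v₂`. So this pair of ranks,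
bounded by `dim P(u)`, determines `v`.
-/

namespace Strip

variable {a b : ℝ}

def mk (x y : ℝ) (h : a ≤ x + y ∧ x + y ≤ b) : Strip a b := ⟨(x, y), h⟩

lemma mk_le_mk {x y x' y' : ℝ} {h : a ≤ x + y ∧ x + y ≤ b} {h' : a ≤ x' + y' ∧ x' + y' ≤ b} :
    mk x y h ≤ mk x' y' h' ↔ x' ≤ x ∧ y ≤ y' := le_def

lemma le_mk {p : Strip a b} {x y : ℝ} {h : a ≤ x + y ∧ x + y ≤ b} :
    p ≤ mk x y h ↔ x ≤ p.1.1 ∧ p.1.2 ≤ y := le_def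

lemma mk_le {p : Strip a b} {x y : ℝ} {h : a ≤ x + y ∧ x + y ≤ b} :
    mk x y h ≤ p ↔ p.1.1 ≤ x ∧ y ≤ p.1.2 := le_def

def BlockCond.cornerX {v u : Strip a b} (h : BlockCond v u) : Strip a b :=
  mk v.1.1 u.1.2 ⟨by linarith [h.2.2], by linarith [(le_def.mp h.1).1, u.2.2]⟩

def BlockCond.cornerY {v u : Strip a b} (h : BlockCond v u) : Strip a b :=
  mk u.1.1 v.1.2 ⟨by linarith [(le_def.mp h.1).2, u.2.1], by linarith [h.2.1]⟩

lemma BlockCond.le_cornerX {v u : Strip a b} (h : BlockCond v u) : u ≤ h.cornerX :=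
  le_mk.mpr ⟨(le_def.mp h.1).1, le_rfl⟩

lemma BlockCond.cornerX_le {v u : Strip a b} (h : BlockCond v u) : h.cornerX ≤ v :=
  mk_le.mpr ⟨le_rfl, (le_def.mp h.1).2⟩

lemma BlockCond.le_cornerY {v u : Strip a b} (h : BlockCond v u) : u ≤ h.cornerY :=
  le_mk.mpr ⟨le_rfl, (le_def.mp h.1).2⟩

lemma BlockCond.cornerY_le {v u : Strip a b} (h : BlockCond v u) : h.cornerY ≤ v :=
  mk_le.mpr ⟨(le_def.mp h.1).1, le_rfl⟩

lemma glideEquiv_zpow_one_symm_apply (x : Strip a b) :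
    (glideEquiv ^ (1 : ℤ) : Strip a b ≃o Strip a b) (glideEquiv.symm x) = x := by
  simp

end Strip

section Cohomological

open Strip

variable {a b : ℝ} {K : Type} [Field K] {P : (Strip a b)ᵒᵖ ⥤ ModuleCat K}

lemma seqMap_seqMap (G : (Strip a b)ᵒᵖ ⥤ ModuleCat K) {x y z : Strip a b}
    (hxy : x ≤ y) (hyz : y ≤ z) (w : G.obj (op z)) :
    seqMap G hxy (seqMap G hyz w) = seqMap G (hxy.trans hyz) w := by
  simp only [seqMap, ← ModuleCat.comp_apply, ← G.map_comp, ← op_comp, homOfLE_comp]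

lemma range_seqMap_trans_le (G : (Strip a b)ᵒᵖ ⥤ ModuleCat K) {x y z : Strip a b}
    (hxy : x ≤ y) (hyz : y ≤ z) :
    LinearMap.range (seqMap G (hxy.trans hyz)).hom ≤ LinearMap.range (seqMap G hxy).hom := by
  rintro _ ⟨w, rfl⟩
  exact ⟨seqMap G hyz w, seqMap_seqMap G hxy hyz w⟩

lemma exact_seqMap_congr {x x' y y' z z' : Strip a b} (hx : x = x') (hy : y = y') (hz : z = z')
    {hxy : x ≤ y} {hyz : y ≤ z} {hxy' : x' ≤ y'} {hyz' : y' ≤ z'}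
    (h : Function.Exact (seqMap P hyz) (seqMap P hxy)) :
    Function.Exact (seqMap P hyz') (seqMap P hxy') := by
  subst hx hy hz
  exact h

lemma Cohomological.exact_horizontal_middle (hP : Cohomological a b K P) {x y w : Strip a b}
    (hxy : x ≤ y) (hyw : y ≤ w) (hy : y.1.2 = x.1.2) (hw : w.1 = (y.1.1, b - x.1.1)) :
    Function.Exact (seqMap P hyw) (seqMap P hxy) :=
  (hP.2 x y w ⟨hxy, hyw, Or.inr ⟨by rw [hw], hy, by rw [hw]; ring⟩⟩ 0).2.1

lemma Cohomological.exact_horizontal_bottom (hP : Cohomological a b K P) {x y z : Strip a b}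
    (hxy : x ≤ y) (hzx : z ≤ x) (hy : y.1.2 = x.1.2) (hz : z.1 = (x.1.1, a - y.1.1)) :
    Function.Exact (seqMap P hxy) (seqMap P hzx) := by
  obtain ⟨hx₁, hx₂⟩ := x.2
  obtain ⟨hy₁, hy₂⟩ := y.2
  obtain ⟨hyx, hxy₂⟩ := le_def.mp hxy
  let w : Strip a b := mk y.1.1 (b - x.1.1) ⟨by linarith, by linarith⟩
  have hyw : y ≤ w := le_mk.mpr ⟨le_rfl, by linarith⟩
  have hw : glideEquiv.symm w = z := Subtype.ext <| by
    rw [glideEquiv_symm_coords, hz]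
    exact Prod.ext (by change b - (b - x.1.1) = x.1.1; ring) rfl
  exact exact_seqMap_congr hw rfl rfl
    (hP.2 x y w ⟨hxy, hyw, Or.inr ⟨rfl, hy, by change x.1.1 + (b - x.1.1) = b; ring⟩⟩ 0).2.2

-- The glide `T` turns this vertical edge into a horizontal one.
lemma Cohomological.exact_vertical_bottom (hP : Cohomological a b K P) {x y z : Strip a b}
    (hxy : x ≤ y) (hzx : z ≤ x) (hy : y.1.1 = x.1.1) (hz : z.1 = (b - y.1.2, x.1.2)) :
    Function.Exact (seqMap P hxy) (seqMap P hzx) := by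
  have hyz : glideEquiv.symm y ≤ z := le_def.mpr <| by
    rw [glideEquiv_symm_coords, hz]
    exact ⟨le_rfl, by linarith [(le_def.mp hzx).2, x.2.1, hy]⟩
  have rect : IsCohomRect a b (glideEquiv.symm x) (glideEquiv.symm y) z := by
    refine ⟨glideEquiv.symm.monotone hxy, hyz, Or.inr ⟨?_, ?_, ?_⟩⟩
    · simp only [glideEquiv_symm_coords, hz]
    · simp only [glideEquiv_symm_coords, hy]
    · simp only [glideEquiv_symm_coords, hz]
      ring
  exact exact_seqMap_congr (glideEquiv_zpow_one_symm_apply z)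
    (glideEquiv_zpow_one_symm_apply x) (glideEquiv_zpow_one_symm_apply y) (hP.2 _ _ _ rect 1).2.2

end Cohomological

section Generators

open Strip

variable {a b : ℝ} {K : Type} [Field K] {P : (Strip a b)ᵒᵖ ⥤ ModuleCat K}

variable (P) in
def imageFromAbove (v : Strip a b) : Submodule K (P.obj (op v)) :=
  ⨆ (w : Strip a b) (h : v < w), LinearMap.range (seqMap P h.le).hom

lemma imageFromAbove_le_ker {v : Strip a b} (η : P ⟶ SimpleF a b K v) :
    imageFromAbove P v ≤ LinearMap.ker (η.app (op v)).hom := by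
  refine iSup₂_le fun w hvw => ?_
  rintro _ ⟨z, rfl⟩
  change (P.map _ ≫ η.app _) z = 0
  rw [η.naturality]
  funext p
  exact dif_neg hvw.ne'

lemma imageFromAbove_ne_top_of_app_ne_zero {v : Strip a b} (η : P ⟶ SimpleF a b K v)
    (hη : η.app (op v) ≠ 0) : imageFromAbove P v ≠ ⊤ := fun htop =>
  hη <| ModuleCat.hom_ext <| LinearMap.ker_eq_top.mp <| top_le_iff.mp <|
    htop ▸ imageFromAbove_le_ker η

lemma exists_app_ne_zero_of_beta0_ne_zero {G : (Strip a b)ᵒᵖ ⥤ ModuleCat K} {v : Strip a b}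
    (h : beta0 a b K G v ≠ 0) : ∃ η : G ⟶ SimpleF a b K v, η.app (op v) ≠ 0 := by
  classical
  rw [beta0, ite_ne_right_iff] at h
  have := Module.nontrivial_of_finrank_pos (Nat.pos_of_ne_zero h.2)
  obtain ⟨η, hη⟩ := exists_ne (0 : G ⟶ SimpleF a b K v)
  refine ⟨η, fun h0 => hη (NatTrans.ext (funext fun w => ?_))⟩
  by_cases hw : w.unop = v
  · obtain rfl : w = op v := congrArg op hw
    exact h0
  · exact ModuleCat.hom_ext (LinearMap.ext fun x => funext fun p => absurd p.down hw)

lemma imageFromAbove_ne_top_of_beta0_ne_zero {G : (Strip a b)ᵒᵖ ⥤ ModuleCat K} {v : Strip a b}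
    (g : P ⟶ G) (hg : ∀ u, Function.Surjective (g.app u)) (h : beta0 a b K G v ≠ 0) :
    imageFromAbove P v ≠ ⊤ := by
  obtain ⟨η, hη⟩ := exists_app_ne_zero_of_beta0_ne_zero h
  refine imageFromAbove_ne_top_of_app_ne_zero (g ≫ η) fun h0 => hη ?_
  ext x
  obtain ⟨y, rfl⟩ := hg _ x
  exact congrArg (fun φ => φ.hom y) h0

lemma seqMap_mem_imageFromAbove {v w : Strip a b} (h : v < w) (z : P.obj (op w)) :
    seqMap P h.le z ∈ imageFromAbove P v :=
  le_iSup₂ (f := fun w (h : v < w) => LinearMap.range (seqMap P h.le).hom) w h ⟨z, rfl⟩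

lemma Cohomological.mem_imageFromAbove_of_seqMap_eq_zero (hP : Cohomological a b K P)
    {v n : Strip a b} (h : BlockCond v n) {ξ : P.obj (op v)} (hξ : seqMap P h.1 ξ = 0) :
    ξ ∈ imageFromAbove P v := by
  obtain ⟨hnv, hx, hy⟩ := h
  obtain ⟨hnv₁, hnv₂⟩ := le_def.mp hnv
  obtain ⟨hv₁, hv₂⟩ := v.2
  obtain ⟨hn₁, hn₂⟩ := n.2
  let m : Strip a b := mk v.1.1 n.1.2 ⟨by linarith, by linarith⟩
  let w : Strip a b := mk v.1.1 (b - n.1.1) ⟨by linarith, by linarith⟩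
  let c : Strip a b := mk (a - n.1.2) v.1.2 ⟨by linarith, by linarith⟩
  have hnm : n ≤ m := le_mk.mpr ⟨hnv₁, le_rfl⟩
  have hmv : m ≤ v := mk_le.mpr ⟨le_rfl, hnv₂⟩
  have hmw : m ≤ w := mk_le_mk.mpr ⟨le_rfl, by linarith⟩
  have hvw : v < w := lt_of_le_not_ge (le_mk.mpr ⟨le_rfl, by linarith⟩)
    fun h => by linarith [(mk_le.mp h).2]
  have hvc : v < c := lt_of_le_not_ge (le_mk.mpr ⟨by linarith, le_rfl⟩)
    fun h => by linarith [(mk_le.mp h).1]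
  -- `ξ|m` lifts to `w` (rectangle `n m w`), and then `ξ - ζ|v` vanishes at `m`, so lifts to `c`.
  obtain ⟨ζ, hζ⟩ := (hP.exact_horizontal_middle hnm hmw rfl rfl (seqMap P hmv ξ)).mp
    (by rw [seqMap_seqMap]; exact hξ)
  have hdiff : seqMap P hmv (ξ - seqMap P hvw.le ζ) = 0 := by
    rw [map_sub, seqMap_seqMap, hζ, sub_self]
  obtain ⟨ρ, hρ⟩ := (hP.exact_horizontal_bottom hvc.le hmv rfl
    (Prod.ext rfl (sub_sub_cancel a _).symm) _).mp hdiff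
  rw [← sub_add_cancel ξ (seqMap P hvw.le ζ), ← hρ]
  exact add_mem (seqMap_mem_imageFromAbove hvc ρ) (seqMap_mem_imageFromAbove hvw ζ)

end Generators

section Finiteness

open Strip

variable {a b : ℝ} {K : Type} [Field K] {P : (Strip a b)ᵒᵖ ⥤ ModuleCat K}

lemma Cohomological.range_seqMap_cornerX_lt (hP : Cohomological a b K P) {u v v' : Strip a b}
    (hv : BlockCond v u) (hv' : BlockCond v' u) (hlt : v.1.1 < v'.1.1)
    (hgen : imageFromAbove P v' ≠ ⊤) :
    LinearMap.range (seqMap P hv.le_cornerX).hom <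
      LinearMap.range (seqMap P hv'.le_cornerX).hom := by
  have hcorner : hv'.cornerX ≤ hv.cornerX := mk_le_mk.mpr ⟨hlt.le, le_rfl⟩
  refine lt_of_le_of_ne (range_seqMap_trans_le P hv'.le_cornerX hcorner) fun heq =>
    hgen (eq_top_iff.mpr fun ξ _ => ?_)
  let n : Strip a b := mk u.1.1 (a - v.1.1)
    ⟨by linarith [(le_def.mp hv.1).1], by linarith [hv.2.2, u.2.2]⟩
  have hnu : n ≤ u := mk_le.mpr ⟨le_rfl, by linarith [hv.2.2]⟩
  have hn : BlockCond v' n := ⟨hnu.trans hv'.1, hv'.2.1, by change _ < a - v.1.1; linarith⟩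
  have hmem : seqMap P hv'.1 ξ ∈ Set.range (seqMap P hv.le_cornerX) := by
    obtain ⟨ζ, hζ⟩ : seqMap P hv'.le_cornerX (seqMap P hv'.cornerX_le ξ) ∈
        LinearMap.range (seqMap P hv.le_cornerX).hom := heq ▸ ⟨_, rfl⟩
    exact ⟨ζ, hζ.trans (seqMap_seqMap P _ _ ξ)⟩
  refine hP.mem_imageFromAbove_of_seqMap_eq_zero hn ?_
  rw [← seqMap_seqMap P hnu hv'.1]
  exact (hP.exact_horizontal_bottom hv.le_cornerX hnu rfl rfl _).mpr hmem

lemma Cohomological.range_seqMap_cornerY_lt (hP : Cohomological a b K P) {u v v' : Strip a b}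
    (hv : BlockCond v u) (hv' : BlockCond v' u) (hlt : v.1.2 < v'.1.2)
    (hgen : imageFromAbove P v ≠ ⊤) :
    LinearMap.range (seqMap P hv'.le_cornerY).hom <
      LinearMap.range (seqMap P hv.le_cornerY).hom := by
  have hcorner : hv.cornerY ≤ hv'.cornerY := mk_le_mk.mpr ⟨le_rfl, hlt.le⟩
  refine lt_of_le_of_ne (range_seqMap_trans_le P hv.le_cornerY hcorner) fun heq =>
    hgen (eq_top_iff.mpr fun ξ _ => ?_)
  let n : Strip a b := mk (b - v'.1.2) u.1.2
    ⟨by linarith [hv'.2.1, u.2.1], by linarith [(le_def.mp hv'.1).2]⟩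
  have hnu : n ≤ u := mk_le.mpr ⟨by linarith [hv'.2.1], le_rfl⟩
  have hn : BlockCond v n := ⟨hnu.trans hv.1, by change b - v'.1.2 < _; linarith, hv.2.2⟩
  have hmem : seqMap P hv.1 ξ ∈ Set.range (seqMap P hv'.le_cornerY) := by
    obtain ⟨ζ, hζ⟩ : seqMap P hv.le_cornerY (seqMap P hv.cornerY_le ξ) ∈
        LinearMap.range (seqMap P hv'.le_cornerY).hom := heq ▸ ⟨_, rfl⟩
    exact ⟨ζ, hζ.trans (seqMap_seqMap P _ _ ξ)⟩
  refine hP.mem_imageFromAbove_of_seqMap_eq_zero hn ?_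
  rw [← seqMap_seqMap P hnu hv.1]
  exact (hP.exact_vertical_bottom hv'.le_cornerY hnu rfl rfl _).mpr hmem

lemma Cohomological.finite_blockCond_imageFromAbove_ne_top (hP : Cohomological a b K P)
    (u : Strip a b) [FiniteDimensional K (P.obj (op u))] :
    {v | BlockCond v u ∧ imageFromAbove P v ≠ ⊤}.Finite := by
  set S := {v | BlockCond v u ∧ imageFromAbove P v ≠ ⊤}
  let N := Module.finrank K (P.obj (op u))
  let ranks (v : S) : Fin (N + 1) × Fin (N + 1) :=
    (⟨Module.finrank K (LinearMap.range (seqMap P v.2.1.le_cornerX).hom),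
      Nat.lt_succ_of_le (Submodule.finrank_le _)⟩,
     ⟨Module.finrank K (LinearMap.range (seqMap P v.2.1.le_cornerY).hom),
      Nat.lt_succ_of_le (Submodule.finrank_le _)⟩)
  have : Finite S := Finite.of_injective ranks fun v v' h => by
    obtain ⟨hX, hY⟩ := Prod.ext_iff.mp h
    have hX' := Fin.val_eq_of_eq hX
    have hY' := Fin.val_eq_of_eq hY
    have hx : v.1.1.1 = v'.1.1.1 := le_antisymm
      (not_lt.mp fun hlt => (Submodule.finrank_lt_finrank_of_lt
        (hP.range_seqMap_cornerX_lt v'.2.1 v.2.1 hlt v.2.2)).ne hX'.symm)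
      (not_lt.mp fun hlt => (Submodule.finrank_lt_finrank_of_lt
        (hP.range_seqMap_cornerX_lt v.2.1 v'.2.1 hlt v'.2.2)).ne hX')
    have hy : v.1.1.2 = v'.1.1.2 := le_antisymm
      (not_lt.mp fun hlt => (Submodule.finrank_lt_finrank_of_lt
        (hP.range_seqMap_cornerY_lt v'.2.1 v.2.1 hlt v'.2.2)).ne hY')
      (not_lt.mp fun hlt => (Submodule.finrank_lt_finrank_of_lt
        (hP.range_seqMap_cornerY_lt v.2.1 v'.2.1 hlt v.2.2)).ne hY'.symm)
    exact Subtype.ext (Subtype.ext (Prod.ext hx hy))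
  exact S.toFinite

end Finiteness

/-- the 0-th Betti function of a `𝒥`-presentable functor is an admissible
Betti function. -/
theorem beta0_admissible_of_presentable (a b : ℝ) (K : Type) [Field K]
    (G : (Strip a b)ᵒᵖ ⥤ ModuleCat K) (hG : JPresentable a b K G) :
    AdmissibleBetti a b (beta0 a b K G) := by
  obtain ⟨_, P, _, ⟨hfin, hcoh, -, c, hc⟩, _, g, -, hg⟩ := hG
  have hgen (v : Strip a b) (hv : beta0 a b K G v ≠ 0) : imageFromAbove P v ≠ ⊤ :=
    imageFromAbove_ne_top_of_beta0_ne_zero g hg hv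
  refine ⟨fun v hv => if_neg hv, ⟨c, fun v hv => ?_⟩, fun u => ?_⟩
  · by_contra hne
    exact hgen v hne (eq_top_iff.mpr fun x _ => hc v hv x ▸ zero_mem _)
  · have := hfin u
    exact (hcoh.finite_blockCond_imageFromAbove_ne_top u).subset fun v hv => ⟨hv.1, hgen v hv.2⟩
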